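/- Let n ≥ 2 and let P = [2] × K_{n−1}; identify lower sets of P with pairs (I_1, I_2) of lower sets of K_{n−1} with I_2 ⊆ I_1, and set I_n = {1, …, n−1, n} ⊆ K_{n−1}. Then the orbit of the lower set (I_n, I_n) under the reverse operator 𝔛 of P has exactly 2n+1 elements, 𝔛^{2n+1}(I_n, I_n) = (I_n, I_n), and (I_n, I_n) is the unique lower set of cardinality 2n in that orbit. -/

import Mathlib

/-- The reverse operator `𝔛` on lower sets of a poset: the lower set generated by
the minimal elements of the complement. -/
def XRev {α : Type*} [PartialOrder α] (I : Set α) : Set α :=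
  {x | ∃ y, Minimal (fun z => z ∈ Iᶜ) y ∧ x ≤ y}

/-- The `𝔛`-orbit of a lower set `I` of a finite poset (forward iteration; since
`𝔛` is a bijection on lower sets of a finite poset, this is the full orbit). -/
def XOrbit {α : Type*} [PartialOrder α] (I : Set α) : Set (Set α) :=
  {J | ∃ k : ℕ, XRev^[k] I = J}

/-- The lower set of `[2] × P` corresponding to a pair `(I₁, I₂)` of lower sets
of `P` with `I₂ ⊆ I₁`: coordinate `0` (the bottom of the chain `[2]`) carries
`I₁` and coordinate `1` carries `I₂`. -/
def pairSet {β : Type*} (I₁ I₂ : Set β) : Set (Fin 2 × β) :=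
  {p | if p.1 = 0 then p.2 ∈ I₁ else p.2 ∈ I₂}

/-- The poset `K_{n-1} = [n-1] ⊕ ([1] ⊔ [1]) ⊕ [n-1]`, realized as pairs
`(rank, tag)` with `1 ≤ rank ≤ 2n-1`, where only rank `n` carries two elements
(tags `false` for `n` and `true` for `n′`). -/
def KType (n : ℕ) : Type :=
  {p : ℕ × Bool // 1 ≤ p.1 ∧ p.1 ≤ 2 * n - 1 ∧ (p.1 ≠ n → p.2 = false)}

/-- In `K_{n-1}`, `x ≤ y` iff `x = y` or `x` has strictly smaller rank. -/
instance (n : ℕ) : PartialOrder (KType n) where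
  le x y := x = y ∨ x.1.1 < y.1.1
  le_refl x := Or.inl rfl
  le_trans x y z hxy hyz := by
    rcases hxy with rfl | h
    · exact hyz
    · rcases hyz with rfl | h'
      · exact Or.inr h
      · exact Or.inr (h.trans h')
  le_antisymm x y hxy hyx := by
    rcases hxy with rfl | h
    · rfl
    · rcases hyx with rfl | h'
      · rfl
      · omega

/-- The rank-level lower set `L_j` of `K_{n-1}`. -/
def KL (n : ℕ) (j : ℕ) : Set (KType n) := {x | x.1.1 ≤ j}

/-- The lower set `I_n = {1, …, n-1, n}` of `K_{n-1}`. -/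
def KIn (n : ℕ) : Set (KType n) := {x | x.1.1 < n ∨ x.1 = (n, false)}

/-- The lower set `I_{n′} = {1, …, n-1, n′}` of `K_{n-1}`. -/
def KIn' (n : ℕ) : Set (KType n) := {x | x.1.1 < n ∨ x.1 = (n, true)}

/-!
For a lower set `(I₁, I₂)` of `[2] × Q`, the minimal elements of the complement are the `(0, y)`
with `y` minimal outside `I₁` and the `(1, y)` with `y` minimal outside `I₂` but inside `I₁`, so
`𝔛 (I₁, I₂) = (𝔛 I₁ ∪ D, D)` where `D` is generated by the latter. In `K_{n-1}`, `𝔛` swaps `I_n` and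
`I_{n′}` and sends the rank-level set `L_j` to `L_{j+1}`. Hence the orbit of `(I_n, I_n)` runs
through `(I_n or I_{n′}, L_{k-1})` for `1 ≤ k ≤ n` and `(L_{k-1}, I_n or I_{n′})` for `n < k ≤ 2n`,
the tag alternating at each step, and returns to `(I_n, I_n)` at step `2n+1`. These `2n+1` lower
sets have the pairwise distinct cardinalities `2n`, then `n, …, 2n-1`, then `2n+1, …, 3n`.
-/

section XRev

variable {α : Type*} [PartialOrder α]

lemma XRev_univ : XRev (Set.univ : Set α) = ∅ := by
  simp [XRev, Minimal]

lemma XOrbit_eq_image_Iio {I : Set α} {p : ℕ} (hp : 0 < p) (h : XRev^[p] I = I) :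
    XOrbit I = (fun k => XRev^[k] I) '' Set.Iio p := by
  ext J
  constructor
  · rintro ⟨k, rfl⟩
    exact ⟨k % p, Nat.mod_lt k hp, Function.IsPeriodicPt.iterate_mod_apply h k⟩
  · rintro ⟨k, -, rfl⟩
    exact ⟨k, rfl⟩

def XRevWithin (I J : Set α) : Set α :=
  {x | ∃ y ∈ I, Minimal (· ∈ Jᶜ) y ∧ x ≤ y}

lemma XRevWithin_eq_XRev {I J : Set α} (h : ∀ y, Minimal (· ∈ Jᶜ) y → y ∈ I) :
    XRevWithin I J = XRev J := by
  ext x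
  exact ⟨fun ⟨y, _, hy, hxy⟩ => ⟨y, hy, hxy⟩, fun ⟨y, hy, hxy⟩ => ⟨y, h y hy, hy, hxy⟩⟩

lemma XRevWithin_self (I : Set α) : XRevWithin I I = ∅ :=
  Set.eq_empty_of_forall_notMem fun _ ⟨_, hyI, hy, _⟩ => hy.prop hyI

end XRev

lemma ncard_pairSet {β : Type*} [Finite β] (I₁ I₂ : Set β) :
    (pairSet I₁ I₂).ncard = I₁.ncard + I₂.ncard := by
  have h : pairSet I₁ I₂ = Prod.mk 0 '' I₁ ∪ Prod.mk 1 '' I₂ := by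
    ext ⟨i, x⟩
    fin_cases i <;> simp [pairSet]
  rw [h, Set.ncard_union_eq, Set.ncard_image_of_injective _ (Prod.mk_right_injective 0),
    Set.ncard_image_of_injective _ (Prod.mk_right_injective 1)]
  exact Set.disjoint_left.mpr fun _ ⟨_, _, h₀⟩ ⟨_, _, h₁⟩ => by simp [← h₀] at h₁

section Pair

variable {β : Type*} [PartialOrder β] {I₁ I₂ : Set β}

lemma minimal_compl_pairSet_zero {y : β} :
    Minimal (· ∈ (pairSet I₁ I₂)ᶜ) ((0 : Fin 2), y) ↔ Minimal (· ∈ I₁ᶜ) y := by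
  simp [minimal_iff_forall_lt, pairSet, Prod.forall, Fin.forall_fin_two, Prod.lt_iff]

lemma minimal_compl_pairSet_one (hI₁ : IsLowerSet I₁) {y : β} :
    Minimal (· ∈ (pairSet I₁ I₂)ᶜ) ((1 : Fin 2), y) ↔ y ∈ I₁ ∧ Minimal (· ∈ I₂ᶜ) y := by
  have hI₁y : (∀ z, z ≤ y ∨ z < y → z ∈ I₁) ↔ y ∈ I₁ :=
    ⟨fun h => h y (Or.inl le_rfl), fun hy z hz => hI₁ (hz.elim id le_of_lt) hy⟩
  simp [minimal_iff_forall_lt, pairSet, Prod.forall, Fin.forall_fin_two, Prod.lt_iff, hI₁y,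
    and_left_comm]

lemma XRev_pairSet (hI₁ : IsLowerSet I₁) :
    XRev (pairSet I₁ I₂) = pairSet (XRev I₁ ∪ XRevWithin I₁ I₂) (XRevWithin I₁ I₂) := by
  ext ⟨i, x⟩
  simp only [XRev, XRevWithin, Set.mem_ofPred_eq, Prod.exists, Fin.exists_fin_two,
    minimal_compl_pairSet_zero, minimal_compl_pairSet_one hI₁, Prod.mk_le_mk]
  fin_cases i <;> simp [pairSet, and_assoc]

end Pair

namespace KType

variable {n : ℕ}

lemma le_iff {x y : KType n} : x ≤ y ↔ x = y ∨ x.1.1 < y.1.1 := Iff.rfl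

lemma lt_iff {x y : KType n} : x < y ↔ x.1.1 < y.1.1 := by
  rw [lt_iff_le_and_ne, le_iff]
  constructor
  · rintro ⟨h | h, hne⟩
    · exact absurd h hne
    · exact h
  · exact fun h => ⟨Or.inr h, by rintro rfl; exact lt_irrefl _ h⟩

lemma ext_iff {x y : KType n} : x = y ↔ x.1 = y.1 := Subtype.ext_iff

def ofRank (r : ℕ) (h₁ : 1 ≤ r) (h₂ : r ≤ 2 * n - 1) : KType n := ⟨(r, false), h₁, h₂, fun _ => rfl⟩

/-- `mid hn false` is `n` and `mid hn true` is `n′`. -/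
def mid (hn : 1 ≤ n) (b : Bool) : KType n := ⟨(n, b), hn, by omega, fun h => absurd rfl h⟩

@[simp] lemma ofRank_val (r : ℕ) (h₁ : 1 ≤ r) (h₂ : r ≤ 2 * n - 1) :
    (ofRank r h₁ h₂ : KType n).1 = (r, false) := rfl

@[simp] lemma mid_val (hn : 1 ≤ n) (b : Bool) : (mid hn b).1 = (n, b) := rfl

instance : Finite (KType n) :=
  Set.Finite.to_subtype <| ((Set.finite_Iic (2 * n - 1)).prod (Set.finite_univ (α := Bool))).subset
    fun _ hp => ⟨hp.2.1, trivial⟩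

end KType

section KSets

variable {n : ℕ}

/-- `KI n false = I_n` and `KI n true = I_{n′}`: indexing them by the tag of their top element
makes `𝔛` act on them as `Bool.not`. -/
def KI (n : ℕ) (b : Bool) : Set (KType n) := {x | x.1.1 < n ∨ x.1 = (n, b)}

lemma KIn_eq_KI : KIn n = KI n false := rfl

lemma minimal_compl_KL {j : ℕ} {y : KType n} : Minimal (· ∈ (KL n j)ᶜ) y ↔ y.1.1 = j + 1 := by
  simp only [minimal_iff_forall_lt, KL, KType.lt_iff, Set.mem_compl_iff, Set.mem_ofPred_eq,
    not_le, not_lt]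
  constructor
  · rintro ⟨hjy, hmin⟩
    by_contra hne
    have hy := y.2.2.1
    have : j + 1 ≤ j :=
      @hmin (KType.ofRank (j + 1) (by omega) (by omega)) (show j + 1 < y.1.1 by omega)
    omega
  · intro hy
    exact ⟨by omega, fun _ _ => by omega⟩

lemma minimal_compl_KI (hn : 1 ≤ n) {b : Bool} {y : KType n} :
    Minimal (· ∈ (KI n b)ᶜ) y ↔ y.1 = (n, !b) := by
  simp only [minimal_iff_forall_lt, KI, KType.lt_iff, Set.mem_compl_iff, Set.mem_ofPred_eq,
    not_or, not_lt, not_and_or, not_not]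
  obtain ⟨⟨r, c⟩, hy⟩ := y
  simp only [Prod.mk.injEq]
  constructor
  · rintro ⟨⟨hnr, hcb⟩, hmin⟩
    have hrn : r = n := by
      by_contra hne
      have := @hmin (KType.mid hn !b) (show n < r by omega)
      simp at this
    exact ⟨hrn, Bool.eq_not_iff.mpr (hcb ∘ And.intro hrn)⟩
  · rintro ⟨rfl, rfl⟩
    exact ⟨⟨le_rfl, by simp⟩, fun _ hz => Or.inl (not_le.mpr hz)⟩

lemma isLowerSet_KL (j : ℕ) : IsLowerSet (KL n j) := by
  rintro x y (rfl | hyx) hx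
  · exact hx
  · exact hyx.le.trans hx

lemma isLowerSet_KI (b : Bool) : IsLowerSet (KI n b) := by
  rintro x y (rfl | hyx) hx
  · exact hx
  · left
    rcases hx with hx | hx
    · exact hyx.trans hx
    · rw [hx] at hyx
      exact hyx

lemma KL_zero : KL n 0 = ∅ :=
  Set.eq_empty_of_forall_notMem fun x (hx : x.1.1 ≤ 0) => by
    have := x.2.1
    omega

lemma KL_two_mul_sub_one : KL n (2 * n - 1) = Set.univ :=
  Set.eq_univ_of_forall fun x => x.2.2.1

lemma KL_subset_KI {j : ℕ} (hj : j < n) (b : Bool) : KL n j ⊆ KI n b :=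
  fun x (hx : x.1.1 ≤ j) => Or.inl (by omega)

lemma KI_subset_KL {j : ℕ} (hj : n ≤ j) (b : Bool) : KI n b ⊆ KL n j := by
  rintro x (hx | hx)
  · exact (show x.1.1 ≤ j by omega)
  · exact (show x.1.1 ≤ j by rw [hx]; exact hj)

lemma KI_union_KI_not (b : Bool) : KI n b ∪ KI n (!b) = KL n n := by
  ext x
  change (x.1.1 < n ∨ x.1 = (n, b)) ∨ (x.1.1 < n ∨ x.1 = (n, !b)) ↔ x.1.1 ≤ n
  obtain ⟨⟨r, c⟩, -⟩ := x
  cases b <;> cases c <;> simp <;> omega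

lemma XRev_KL {j : ℕ} (hj : j + 1 ≤ 2 * n - 1) : XRev (KL n j) = KL n (j + 1) := by
  ext x
  simp only [XRev, Set.mem_ofPred_eq, minimal_compl_KL]
  simp only [KL, Set.mem_ofPred_eq, KType.le_iff]
  constructor
  · rintro ⟨y, hy, rfl | hxy⟩ <;> omega
  · intro hx
    rcases hx.lt_or_eq with hlt | heq
    · exact ⟨KType.ofRank (j + 1) (by omega) hj, rfl, Or.inr hlt⟩
    · exact ⟨x, heq, Or.inl rfl⟩

lemma XRev_KI (hn : 1 ≤ n) (b : Bool) : XRev (KI n b) = KI n (!b) := by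
  ext x
  simp only [XRev, Set.mem_ofPred_eq, minimal_compl_KI hn]
  simp only [KI, Set.mem_ofPred_eq, KType.le_iff]
  constructor
  · rintro ⟨y, hy, rfl | hxy⟩
    · exact Or.inr hy
    · rw [hy] at hxy
      exact Or.inl hxy
  · rintro (hx | hx)
    · exact ⟨KType.mid hn !b, rfl, Or.inr hx⟩
    · exact ⟨x, hx, Or.inl rfl⟩

lemma XRevWithin_KI_KL_pred (hn : 1 ≤ n) (b : Bool) :
    XRevWithin (KI n b) (KL n (n - 1)) = KI n b := by
  ext x
  simp only [XRevWithin, Set.mem_ofPred_eq, minimal_compl_KL]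
  simp only [KI, Set.mem_ofPred_eq, KType.le_iff]
  constructor
  · rintro ⟨y, hyb | hyb, hy, rfl | hxy⟩
    · omega
    · omega
    · exact Or.inr hyb
    · rw [hyb] at hxy
      exact Or.inl hxy
  · rintro (hx | hx)
    · exact ⟨KType.mid hn b, Or.inr rfl, show n = n - 1 + 1 by omega, Or.inr hx⟩
    · exact ⟨x, Or.inr hx, by rw [hx]; omega, Or.inl rfl⟩

lemma XRev_pairSet_KI_KI (hn : 1 ≤ n) (b : Bool) :
    XRev (pairSet (KI n b) (KI n b)) = pairSet (KI n (!b)) (KL n 0) := by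
  rw [XRev_pairSet (isLowerSet_KI b), XRevWithin_self, XRev_KI hn, Set.union_empty, KL_zero]

lemma XRev_pairSet_KI_KL {j : ℕ} (hj : j + 1 < n) (b : Bool) :
    XRev (pairSet (KI n b) (KL n j)) = pairSet (KI n (!b)) (KL n (j + 1)) := by
  have hmin : ∀ y, Minimal (· ∈ (KL n j)ᶜ) y → y ∈ KI n b := fun y hy =>
    Or.inl (by rw [minimal_compl_KL.mp hy]; exact hj)
  rw [XRev_pairSet (isLowerSet_KI b), XRevWithin_eq_XRev hmin, XRev_KI (by omega),
    XRev_KL (by omega), Set.union_eq_left.mpr (KL_subset_KI hj _)]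

lemma XRev_pairSet_KI_KL_pred (hn : 1 ≤ n) (b : Bool) :
    XRev (pairSet (KI n b) (KL n (n - 1))) = pairSet (KL n n) (KI n b) := by
  rw [XRev_pairSet (isLowerSet_KI b), XRevWithin_KI_KL_pred hn, XRev_KI hn, Set.union_comm,
    KI_union_KI_not]

lemma XRev_pairSet_KL_KI {j : ℕ} (hj : n ≤ j) (hj' : j + 1 ≤ 2 * n - 1) (b : Bool) :
    XRev (pairSet (KL n j) (KI n b)) = pairSet (KL n (j + 1)) (KI n (!b)) := by
  have hn : 1 ≤ n := by omega
  have hmin : ∀ y, Minimal (· ∈ (KI n b)ᶜ) y → y ∈ KL n j := fun y hy =>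
    show y.1.1 ≤ j by rw [(minimal_compl_KI hn).mp hy]; exact hj
  rw [XRev_pairSet (isLowerSet_KL j), XRevWithin_eq_XRev hmin, XRev_KL hj', XRev_KI hn,
    Set.union_eq_left.mpr (KI_subset_KL (by omega) _)]

lemma XRev_pairSet_KL_top_KI (hn : 1 ≤ n) (b : Bool) :
    XRev (pairSet (KL n (2 * n - 1)) (KI n b)) = pairSet (KI n (!b)) (KI n (!b)) := by
  rw [KL_two_mul_sub_one, XRev_pairSet isLowerSet_univ,
    XRevWithin_eq_XRev fun _ _ => Set.mem_univ _, XRev_univ, Set.empty_union, XRev_KI hn]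

lemma iterate_succ_XRev_pairSet_KI (hn : 1 ≤ n) {j : ℕ} (hj : j < n) :
    XRev^[j + 1] (pairSet (KI n false) (KI n false)) = pairSet (KI n (j + 1).bodd) (KL n j) := by
  induction j with
  | zero => exact XRev_pairSet_KI_KI hn false
  | succ j ih =>
    rw [Function.iterate_succ_apply', ih (by omega), XRev_pairSet_KI_KL hj, Nat.bodd_succ (j + 1)]

lemma iterate_add_succ_XRev_pairSet_KI (hn : 1 ≤ n) {i : ℕ} (hi : i < n) :
    XRev^[n + 1 + i] (pairSet (KI n false) (KI n false)) =
      pairSet (KL n (n + i)) (KI n (n + i).bodd) := by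
  induction i with
  | zero =>
    obtain ⟨m, rfl⟩ : ∃ m, n = m + 1 := ⟨n - 1, by omega⟩
    rw [Function.iterate_succ_apply', iterate_succ_XRev_pairSet_KI hn (by omega : m < m + 1)]
    exact XRev_pairSet_KI_KL_pred hn _
  | succ i ih =>
    rw [← add_assoc, Function.iterate_succ_apply', ih (by omega), XRev_pairSet_KL_KI (by omega)
      (by omega), ← add_assoc, Nat.bodd_succ]

lemma iterate_XRev_pairSet_KI_period (hn : 1 ≤ n) :
    XRev^[2 * n + 1] (pairSet (KI n false) (KI n false)) = pairSet (KI n false) (KI n false) := by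
  have hodd : (2 * n - 1).bodd = true := by
    obtain ⟨m, rfl⟩ : ∃ m, n = m + 1 := ⟨n - 1, by omega⟩
    simp [show 2 * (m + 1) - 1 = 2 * m + 1 by omega, Nat.bodd_mul]
  rw [show 2 * n + 1 = n + 1 + (n - 1) + 1 by omega, Function.iterate_succ_apply',
    iterate_add_succ_XRev_pairSet_KI hn (by omega), show n + (n - 1) = 2 * n - 1 by omega,
    XRev_pairSet_KL_top_KI hn, hodd, Bool.not_true]

lemma KL_succ (j : ℕ) : KL n (j + 1) = KL n j ∪ {x | x.1.1 = j + 1} := by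
  ext x
  change x.1.1 ≤ j + 1 ↔ x.1.1 ≤ j ∨ x.1.1 = j + 1
  omega

lemma ncard_rank_eq {r : ℕ} (h₁ : 1 ≤ r) (h₂ : r ≤ 2 * n - 1) :
    {x : KType n | x.1.1 = r}.ncard = if r = n then 2 else 1 := by
  split_ifs with hr
  · subst hr
    have : {x : KType r | x.1.1 = r} = {KType.mid h₁ false, KType.mid h₁ true} := by
      ext x
      simp only [Set.mem_ofPred_eq, Set.mem_insert_iff, Set.mem_singleton_iff, KType.ext_iff,
        KType.mid_val]
      obtain ⟨⟨s, c⟩, -⟩ := x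
      cases c <;> simp
    rw [this, Set.ncard_pair fun h => by simpa using congrArg (·.1.2) h]
  · rw [Set.ncard_eq_one]
    refine ⟨KType.ofRank r h₁ h₂, ?_⟩
    ext x
    simp only [Set.mem_ofPred_eq, Set.mem_singleton_iff, KType.ext_iff, KType.ofRank_val]
    obtain ⟨⟨s, c⟩, hx⟩ := x
    simp only [Prod.mk.injEq, iff_self_and]
    exact fun hs => hx.2.2 (hs ▸ hr)

lemma ncard_KL (hn : 1 ≤ n) {j : ℕ} (hj : j ≤ 2 * n - 1) :
    (KL n j).ncard = if n ≤ j then j + 1 else j := by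
  induction j with
  | zero => rw [KL_zero, Set.ncard_empty, if_neg (by omega)]
  | succ j ih =>
    have hdisj : Disjoint (KL n j) {x | x.1.1 = j + 1} :=
      Set.disjoint_left.mpr fun x (hx : x.1.1 ≤ j) (hx' : x.1.1 = j + 1) => by omega
    rw [KL_succ, Set.ncard_union_eq hdisj, ih (by omega), ncard_rank_eq (by omega) hj]
    split_ifs <;> omega

lemma ncard_KI (hn : 1 ≤ n) (b : Bool) : (KI n b).ncard = n := by
  have h : KI n b = insert (KType.mid hn b) (KL n (n - 1)) := by
    ext x
    change x.1.1 < n ∨ x.1 = (n, b) ↔ x = KType.mid hn b ∨ x.1.1 ≤ n - 1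
    rw [KType.ext_iff, KType.mid_val, or_comm, Nat.lt_iff_le_pred hn]
  have hmid : KType.mid hn b ∉ KL n (n - 1) := fun hx => by
    have : n ≤ n - 1 := hx
    omega
  rw [h, Set.ncard_insert_of_notMem hmid, ncard_KL hn (by omega), if_neg (by omega)]
  omega

lemma ncard_iterate_XRev_pairSet_KI {k : ℕ} (hn : 1 ≤ n) (hk : k ≤ 2 * n) :
    (XRev^[k] (pairSet (KI n false) (KI n false))).ncard =
      if k = 0 then 2 * n else if k ≤ n then n + k - 1 else n + k := by
  rcases Nat.eq_zero_or_pos k with rfl | hk₀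
  · rw [Function.iterate_zero_apply, ncard_pairSet, ncard_KI hn, if_pos rfl]
    omega
  rcases le_or_gt k n with hkn | hkn
  · obtain ⟨j, rfl⟩ : ∃ j, k = j + 1 := ⟨k - 1, by omega⟩
    rw [iterate_succ_XRev_pairSet_KI hn (by omega), ncard_pairSet, ncard_KI hn,
      ncard_KL hn (by omega), if_neg (by omega), if_neg (by omega), if_pos hkn]
    omega
  · obtain ⟨i, rfl⟩ : ∃ i, k = n + 1 + i := ⟨k - n - 1, by omega⟩
    rw [iterate_add_succ_XRev_pairSet_KI hn (by omega), ncard_pairSet, ncard_KI hn,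
      ncard_KL hn (by omega), if_pos (by omega), if_neg (by omega), if_neg (by omega)]
    omega

lemma injOn_iterate_XRev_pairSet_KI (hn : 1 ≤ n) :
    Set.InjOn (fun k => XRev^[k] (pairSet (KI n false) (KI n false))) (Set.Iio (2 * n + 1)) := by
  intro a (ha : a < 2 * n + 1) b (hb : b < 2 * n + 1) hab
  have hcard := congrArg Set.ncard hab
  simp only [ncard_iterate_XRev_pairSet_KI hn (Nat.lt_succ_iff.mp ha),
    ncard_iterate_XRev_pairSet_KI hn (Nat.lt_succ_iff.mp hb)] at hcard
  split_ifs at hcard <;> omega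

end KSets

/-- For `P = [2] × K_{n-1}`, the `𝔛`-orbit of the lower set `(I_n, I_n)` has
exactly `2n+1` elements, `𝔛^[2n+1] (I_n, I_n) = (I_n, I_n)`, and `(I_n, I_n)`
is the unique lower set of cardinality `2n` in that orbit. -/
theorem stmt12 (n : ℕ) (hn : 2 ≤ n) :
    (XOrbit (pairSet (KIn n) (KIn n))).ncard = 2 * n + 1 ∧
      XRev^[2 * n + 1] (pairSet (KIn n) (KIn n)) = pairSet (KIn n) (KIn n) ∧
      ∀ J ∈ XOrbit (pairSet (KIn n) (KIn n)),
        (J.ncard = 2 * n ↔ J = pairSet (KIn n) (KIn n)) := by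
  have hn₁ : 1 ≤ n := by omega
  have hperiod := iterate_XRev_pairSet_KI_period hn₁
  have hinj := injOn_iterate_XRev_pairSet_KI hn₁
  rw [KIn_eq_KI, XOrbit_eq_image_Iio (Nat.succ_pos _) hperiod]
  refine ⟨by rw [hinj.ncard_image, Set.ncard_Iio_nat], hperiod, ?_⟩
  rintro _ ⟨k, hk, rfl⟩
  rw [ncard_iterate_XRev_pairSet_KI hn₁ (Nat.lt_succ_iff.mp hk)]
  constructor
  · intro hcard
    obtain rfl : k = 0 := by split_ifs at hcard <;> omega
    rfl
  · intro hk₀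
    obtain rfl : k = 0 := hinj hk (by simp) hk₀
    rfl
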